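/- arXiv:2512.02466 — 3 statements merged into one kernel-verified Lean document; each statement's English description precedes it below -/
import Mathlib

section
/- For all real 0 < α < 1 and x > 1, π(x)·log x ≤ ψ(x)/α + x^α·log x. -/
/-! Split the primes `p ≤ x` at `y = x ^ α`. Each prime above `y` has `log p > α log x`, so together
they contribute at most `θ(x) / α ≤ ψ(x) / α` to `π(x) log x`, while there are at most `y` primes
below `y`. -/

open Chebyshev Finset Real

namespace Nat

theorem primeCounting_le_self (n : ℕ) : n.primeCounting ≤ n := by
  rw [← primesLE_card_eq_primeCounting, primesLE_eq_filter_Icc_one]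
  simpa using card_filter_le (Icc 1 n) Nat.Prime

theorem primeCounting_floor_le {y : ℝ} (hy : 0 ≤ y) : ((⌊y⌋₊).primeCounting : ℝ) ≤ y :=
  (Nat.cast_le.mpr (primeCounting_le_self _)).trans (floor_le hy)

end Nat

namespace Chebyshev

theorem primeCounting_mul_log_le_theta_add {x y : ℝ} (hy : 1 ≤ y) :
    ((⌊x⌋₊).primeCounting : ℝ) * log y ≤ θ x + y * log y := by
  set P := Nat.primesLE ⌊x⌋₊
  have hsmall : (#(P.filter fun p : ℕ ↦ (p : ℝ) ≤ y) : ℝ) ≤ y := by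
    refine le_trans ?_ (Nat.primeCounting_floor_le (zero_le_one.trans hy))
    rw [← Nat.primesLE_card_eq_primeCounting]
    refine Nat.cast_le.mpr (card_le_card fun p hp ↦ ?_)
    simp only [P, mem_filter, Nat.mem_primesLE] at hp ⊢
    exact ⟨Nat.le_floor hp.2, hp.1.2⟩
  calc ((⌊x⌋₊).primeCounting : ℝ) * log y = ∑ _p ∈ P, log y := by
        simp [P, Nat.primesLE_card_eq_primeCounting]
    _ ≤ ∑ p ∈ P, (log p + if (p : ℝ) ≤ y then log y else 0) := by
        refine sum_le_sum fun p _ ↦ ?_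
        split_ifs with h
        · simp [log_natCast_nonneg]
        · simpa using log_le_log (zero_lt_one.trans_le hy) (not_le.mp h).le
    _ = θ x + #(P.filter fun p : ℕ ↦ (p : ℝ) ≤ y) * log y := by
        rw [sum_add_distrib, ← sum_filter, theta_eq_sum_primesLE, sum_const, nsmul_eq_mul]
    _ ≤ θ x + y * log y := by
        gcongr
        exact log_nonneg hy

end Chebyshev

open ArithmeticFunction

theorem pi_mul_log_le_general (x α : ℝ) (hα0 : 0 < α) (hx : 1 < x) :
    (Nat.primeCounting ⌊x⌋₊ : ℝ) * Real.log x ≤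
      (∑ n ∈ Finset.Icc 1 ⌊x⌋₊, Λ n) / α + x ^ α * Real.log x := by
  have hψ : ∑ n ∈ Icc 1 ⌊x⌋₊, Λ n = ψ x := by
    rw [psi, ← Icc_add_one_left_eq_Ioc, zero_add]
  have hcut := primeCounting_mul_log_le_theta_add (x := x) (one_le_rpow hx.le hα0.le)
  rw [log_rpow (zero_lt_one.trans hx)] at hcut
  rw [hψ, div_add' _ _ _ hα0.ne', le_div_iff₀ hα0]
  linarith [theta_le_psi x]

theorem pi_mul_log_le (x α : ℝ) (hα0 : 0 < α) (hα1 : α < 1) (hx : 1 < x) :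
    (Nat.primeCounting ⌊x⌋₊ : ℝ) * Real.log x ≤
      (∑ n ∈ Finset.Icc 1 ⌊x⌋₊, Λ n) / α + x ^ α * Real.log x :=
  pi_mul_log_le_general x α hα0 hx
end

section
/- Let ν be a finitely supported function on the positive integers satisfying Σ_n ν(n)/n = 0, and define V(x) = Σ_{k ≤ x} ν(k)·T(x/k) where T(x) = Σ_{n ≤ x} log n. Then V(x) = A·x + O(log x) as x → ∞, where A = −Σ_n ν(n)·log(n)/n. -/
/-!
Only the finitely many `k ≤ N` with `ν k ≠ 0` contribute. Write
`T(y) = y log y - y + E(y)`; Stirling's bounds on `log m!` for `m = ⌊y⌋`, together with the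
mean-value estimate for `t log t - t` between `m` and `y`, give `E(y) = O(log y)`. In
`∑ ν(k) (x/k · log (x/k) - x/k) = (x log x - x) ∑ ν(k)/k - x ∑ ν(k) log k / k` the first sum
vanishes, so `V(x) - A x = ∑_{k ≤ N} ν(k) E(x/k) = O(log x)`.
-/

open Filter Asymptotics

open Finset Real
open scoped Nat

noncomputable def sumLogFloor (y : ℝ) : ℝ := ∑ n ∈ Icc 1 ⌊y⌋₊, log n

theorem sum_Icc_log_eq_log_factorial (m : ℕ) : ∑ n ∈ Icc 1 m, log n = log m ! := by
  induction m with
  | zero => simp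
  | succ m ih =>
    rw [sum_Icc_succ_top (by omega), ih, Nat.factorial_succ, Nat.cast_mul, log_mul (by positivity)
      (by positivity), add_comm, Nat.cast_succ]

theorem abs_log_factorial_sub_le {m : ℕ} (hm : m ≠ 0) :
    |log m ! - (m * log m - m)| ≤ log m / 2 + 1 := by
  have hm0 : (0 : ℝ) < m := by positivity
  have hlower := Stirling.le_log_factorial_stirling hm
  have hstirling : Stirling.stirlingSeq m ≤ exp 1 / √2 := by
    obtain ⟨k, rfl⟩ := Nat.exists_eq_succ_of_ne_zero hm
    simpa using Stirling.stirlingSeq'_antitone (Nat.zero_le k)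
  have hupper : log (Stirling.stirlingSeq m) ≤ 1 - log 2 / 2 := by
    calc log (Stirling.stirlingSeq m) ≤ log (exp 1 / √2) :=
          log_le_log (lt_of_lt_of_le (by positivity) (Stirling.sqrt_pi_le_stirlingSeq hm))
            hstirling
      _ = 1 - log 2 / 2 := by
          rw [log_div (by positivity) (by positivity), log_exp, log_sqrt (by norm_num)]
  have hformula := Stirling.log_stirlingSeq_formula m
  rw [log_div hm0.ne' (exp_pos 1).ne', log_exp, log_mul two_ne_zero hm0.ne'] at hformula
  have h2pi : 0 < log (2 * π) := log_pos (by nlinarith [pi_gt_three])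
  have hlog : 0 ≤ log m := log_natCast_nonneg m
  rw [abs_le]
  constructor <;> linarith

theorem mul_log_sub_self_sub_le {m y : ℝ} (hm : 0 < m) (hy : 0 < y) :
    y * log y - y - (m * log m - m) ≤ (y - m) * log y := by
  have h := log_le_sub_one_of_pos (div_pos hy hm)
  rw [log_div hy.ne' hm.ne', le_sub_iff_add_le, le_div_iff₀ hm] at h
  linarith

theorem le_mul_log_sub_self_sub {m y : ℝ} (hm : 0 < m) (hy : 0 < y) :
    (y - m) * log m ≤ y * log y - y - (m * log m - m) := by
  have h := log_le_sub_one_of_pos (div_pos hm hy)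
  rw [log_div hm.ne' hy.ne', le_sub_iff_add_le, le_div_iff₀ hy] at h
  linarith

theorem abs_sumLogFloor_sub_le {y : ℝ} (hy : 1 ≤ y) :
    |sumLogFloor y - (y * log y - y)| ≤ 3 / 2 * log y + 1 := by
  set m := ⌊y⌋₊
  have hm : m ≠ 0 := (Nat.floor_pos.2 hy).ne'
  have hm0 : (0 : ℝ) < m := by positivity
  have hmy : (m : ℝ) ≤ y := Nat.floor_le (by linarith)
  have hym : y - m ≤ 1 := by linarith [Nat.lt_floor_add_one y]
  have hlog_m : 0 ≤ log m := log_natCast_nonneg m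
  have hlog_my : log m ≤ log y := log_le_log hm0 hmy
  have hfactorial := abs_log_factorial_sub_le hm
  rw [← sum_Icc_log_eq_log_factorial] at hfactorial
  have hupper := mul_log_sub_self_sub_le hm0 (hm0.trans_le hmy)
  have hlower := le_mul_log_sub_self_sub hm0 (hm0.trans_le hmy)
  have : (y - m) * log y ≤ log y := by nlinarith
  have : 0 ≤ (y - m) * log m := by nlinarith
  rw [abs_le] at hfactorial ⊢
  unfold sumLogFloor
  constructor <;> linarith

theorem sumLogFloor_sub_isBigO :
    (fun y ↦ sumLogFloor y - (y * log y - y)) =O[atTop] log := by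
  refine IsBigO.of_bound (5 / 2) ?_
  filter_upwards [eventually_ge_atTop (exp 1)] with y hy
  have hy1 : 1 ≤ y := (one_le_exp zero_le_one).trans hy
  have hlog : 1 ≤ log y := by rwa [le_log_iff_exp_le (by positivity)]
  rw [norm_eq_abs, norm_eq_abs, abs_of_nonneg (zero_le_one.trans hlog)]
  linarith [abs_sumLogFloor_sub_le hy1]

theorem sumLogFloor_div_sub_isBigO {c : ℝ} (hc : 0 < c) :
    (fun x ↦ sumLogFloor (x / c) - (x / c * log (x / c) - x / c)) =O[atTop] log := by
  have h := sumLogFloor_sub_isBigO.comp_tendsto (tendsto_id.atTop_div_const hc)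
  exact h.trans (by
    simpa only [Function.comp_def, id, div_eq_mul_inv] using isBigO_log_mul_const_log_atTop c⁻¹)

theorem finsum_eq_sum_Icc_one {M : Type*} [AddCommMonoid M] {f : ℕ → M} {N : ℕ} (h0 : f 0 = 0)
    (hN : ∀ n, N < n → f n = 0) : ∑ᶠ n, f n = ∑ n ∈ Icc 1 N, f n := by
  refine finsum_eq_sum_of_support_subset f fun n hn ↦ ?_
  have hn0 : n ≠ 0 := by rintro rfl; exact hn h0
  have hnN : n ≤ N := by by_contra! h; exact hn (hN n h)
  simp only [coe_Icc, Set.mem_Icc]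
  omega

theorem sum_mul_div_mul_log_div_sub_div (s : Finset ℕ) (ν : ℕ → ℝ) (hν : ∑ k ∈ s, ν k / k = 0)
    {x : ℝ} (hx : x ≠ 0) :
    ∑ k ∈ s, ν k * (x / k * log (x / k) - x / k) = -(∑ k ∈ s, ν k * log k / k) * x := by
  have hterm : ∀ k ∈ s, ν k * (x / k * log (x / k) - x / k)
      = (x * log x - x) * (ν k / k) - x * (ν k * log k / k) := by
    intro k _
    rcases eq_or_ne (k : ℝ) 0 with hk | hk
    · simp [hk]
    · rw [log_div hx hk]
      field_simp
      ring
  rw [sum_congr rfl hterm, sum_sub_distrib, ← mul_sum, ← mul_sum, hν]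
  ring

theorem V_asymptotic (ν : ℕ → ℝ) (hfin : (Function.support ν).Finite)
    (hc : ∑ᶠ n, ν n / n = 0) :
    (fun x : ℝ => (∑ k ∈ Finset.Icc 1 ⌊x⌋₊, ν k * ∑ n ∈ Finset.Icc 1 ⌊x / k⌋₊, Real.log n)
        - (-∑ᶠ n, ν n * Real.log n / n) * x) =O[atTop] Real.log := by
  obtain ⟨N, hN⟩ := hfin.bddAbove
  have hν : ∀ n, N < n → ν n = 0 := fun n hn ↦
    Function.notMem_support.1 fun h ↦ (hN h).not_gt hn
  rw [finsum_eq_sum_Icc_one (N := N) (by simp) fun n hn ↦ by simp [hν n hn]] at hc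
  rw [finsum_eq_sum_Icc_one (N := N) (by simp) fun n hn ↦ by simp [hν n hn]]
  have hmain : (fun x ↦ ∑ k ∈ Icc 1 N, ν k * (sumLogFloor (x / k) - (x / k * log (x / k) - x / k)))
      =O[atTop] log :=
    IsBigO.fun_sum fun k hk ↦
      (sumLogFloor_div_sub_isBigO (Nat.cast_pos.2 (mem_Icc.1 hk).1)).const_mul_left _
  refine hmain.congr' ?_ EventuallyEq.rfl
  filter_upwards [eventually_ge_atTop (N : ℝ), eventually_gt_atTop 0] with x hxN hx0
  have hsupport : ∑ k ∈ Icc 1 ⌊x⌋₊, ν k * sumLogFloor (x / k)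
      = ∑ k ∈ Icc 1 N, ν k * sumLogFloor (x / k) := by
    refine (sum_subset (Icc_subset_Icc_right (Nat.le_floor hxN)) fun k hk hkN ↦ ?_).symm
    simp only [mem_Icc] at hk hkN
    simp [hν k (by omega)]
  change _ = ∑ k ∈ Icc 1 ⌊x⌋₊, ν k * sumLogFloor (x / k) - _
  rw [← sum_mul_div_mul_log_div_sub_div _ ν hc hx0.ne', hsupport, ← sum_sub_distrib]
  exact sum_congr rfl fun k _ ↦ mul_sub _ _ _
end

section
/- Suppose for constants A > 0, N > 1 that ψ(x) − ψ(x/N) ≤ A·x + C·log(x+2) for all x ≥ 1. Then ψ(x) ≤ (N/(N−1))·A·x + O((log x)²) as x → ∞. -/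
/-!
Iterating the hypothesis along `x, x/N, x/N², …` telescopes `ψ x` into a geometric series
`A x (1 + 1/N + 1/N² + ⋯) ≤ N/(N-1) · A x` plus one error term `C log (x+2)` per step.
There are at most `log x / log N + 1` steps before the argument drops below `1`, where `ψ`
vanishes, so the errors add up to `O((log x)²)`.
-/

open ArithmeticFunction Filter Real Chebyshev

theorem Real.lt_pow_floor_logb_add_one {b x : ℝ} (hb : 1 < b) (hx : 0 < x) :
    x < b ^ (⌊logb b x⌋₊ + 1) :=
  calc x = b ^ logb b x := (rpow_logb (by linarith) hb.ne' hx).symm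
    _ < b ^ ((⌊logb b x⌋₊ + 1 : ℕ) : ℝ) :=
      (rpow_lt_rpow_left_iff hb).mpr (by push_cast; exact Nat.lt_floor_add_one _)
    _ = b ^ (⌊logb b x⌋₊ + 1) := rpow_natCast _ _

theorem Real.log_add_two_le_two_mul_log {x : ℝ} (hx : 2 ≤ x) : log (x + 2) ≤ 2 * log x :=
  calc log (x + 2) ≤ log (x ^ 2) := log_le_log (by linarith) (by nlinarith)
    _ = 2 * log x := by rw [log_pow]; norm_num

section Telescoping

variable {f E : ℝ → ℝ} {A N : ℝ}

theorem le_of_sub_div_le_of_lt_pow (hA : 0 ≤ A) (hN : 1 < N) (hf : ∀ y < 1, f y ≤ 0)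
    (hE : MonotoneOn E (Set.Ici 1)) (hE0 : ∀ x, 1 ≤ x → 0 ≤ E x)
    (h : ∀ x, 1 ≤ x → f x - f (x / N) ≤ A * x + E x) (k : ℕ) {x : ℝ} (hx : 1 ≤ x)
    (hxk : x < N ^ k) : f x ≤ N / (N - 1) * A * x + k * E x := by
  induction k generalizing x with
  | zero => simp at hxk; linarith
  | succ k ih =>
    have hN0 : 0 < N := by linarith
    have hgeom : A * x + N / (N - 1) * A * (x / N) = N / (N - 1) * A * x := by
      field_simp [(by linarith : N - 1 ≠ 0)]; ring
    have hstep := h x hx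
    push_cast
    rcases lt_or_ge (x / N) 1 with hsmall | hlarge
    · have htail : 0 ≤ N / (N - 1) * A * (x / N) := by
        have : 0 < N - 1 := by linarith
        positivity
      have hkE : 0 ≤ k * E x := mul_nonneg k.cast_nonneg (hE0 x hx)
      linarith [hf _ hsmall]
    · have hxkN : x / N < N ^ k := by
        rw [div_lt_iff₀ hN0, ← pow_succ]; exact hxk
      have hEmono : k * E (x / N) ≤ k * E x :=
        mul_le_mul_of_nonneg_left (hE hlarge hx (div_le_self (by linarith) hN.le)) k.cast_nonneg
      linarith [ih hlarge hxkN]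

theorem le_of_sub_div_le (hA : 0 ≤ A) (hN : 1 < N) (hf : ∀ y < 1, f y ≤ 0)
    (hE : MonotoneOn E (Set.Ici 1)) (hE0 : ∀ x, 1 ≤ x → 0 ≤ E x)
    (h : ∀ x, 1 ≤ x → f x - f (x / N) ≤ A * x + E x) {x : ℝ} (hx : 1 ≤ x) :
    f x ≤ N / (N - 1) * A * x + (logb N x + 1) * E x := by
  refine (le_of_sub_div_le_of_lt_pow hA hN hf hE hE0 h _ hx
    (lt_pow_floor_logb_add_one hN (by linarith))).trans ?_
  have := Nat.floor_le (logb_nonneg hN hx)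
  gcongr
  · exact hE0 x hx
  · push_cast; linarith

end Telescoping

theorem Chebyshev.sum_Icc_one_vonMangoldt_eq_psi (x : ℝ) : ∑ n ∈ Finset.Icc 1 ⌊x⌋₊, Λ n = ψ x :=
  rfl

theorem psi_upper_bound_from_telescoping (A N C : ℝ) (hA : 0 < A) (hN : 1 < N)
    (h : ∀ x : ℝ, 1 ≤ x →
      (∑ n ∈ Finset.Icc 1 ⌊x⌋₊, Λ n) - ∑ n ∈ Finset.Icc 1 ⌊x / N⌋₊, Λ n ≤
        A * x + C * Real.log (x + 2)) :
    ∃ C' : ℝ, ∀ᶠ x : ℝ in atTop,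
      ∑ n ∈ Finset.Icc 1 ⌊x⌋₊, Λ n ≤ N / (N - 1) * A * x + C' * (Real.log x) ^ 2 := by
  simp only [sum_Icc_one_vonMangoldt_eq_psi] at h ⊢
  set M := max C 0
  have hM : 0 ≤ M := le_max_right _ _
  have hbound {x : ℝ} (hx : 1 ≤ x) := le_of_sub_div_le (E := fun x ↦ M * log (x + 2)) hA.le hN
    (fun y hy ↦ (psi_eq_zero_of_lt_two (by linarith)).le)
    (fun a ha _ _ hab ↦
      mul_le_mul_of_nonneg_left (log_le_log (by linarith [Set.mem_Ici.mp ha]) (by linarith)) hM)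
    (fun x hx ↦ mul_nonneg hM (log_nonneg (by linarith)))
    (fun x hx ↦ (h x hx).trans (by
      gcongr; exacts [log_nonneg (by linarith), le_max_left _ _])) hx
  refine ⟨2 * M / log N + 2 * M, ?_⟩
  filter_upwards [eventually_ge_atTop 3] with x hx
  have hlogx : 1 ≤ log x := by
    rw [le_log_iff_exp_le (by linarith)]; linarith [exp_one_lt_d9]
  calc ψ x ≤ N / (N - 1) * A * x + (logb N x + 1) * (M * log (x + 2)) := hbound (by linarith)
    _ ≤ N / (N - 1) * A * x + (logb N x + 1) * (M * (2 * log x)) := by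
      have := logb_nonneg hN (by linarith : (1 : ℝ) ≤ x)
      gcongr; exact log_add_two_le_two_mul_log (by linarith)
    _ = N / (N - 1) * A * x + (2 * M / log N * log x ^ 2 + 2 * M * log x) := by
      rw [logb]; field_simp
    _ ≤ N / (N - 1) * A * x + (2 * M / log N + 2 * M) * log x ^ 2 := by
      have := mul_le_mul_of_nonneg_left (by nlinarith : log x ≤ log x ^ 2) hM
      linarith
end
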